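/- Let $t_1,\dots,t_B$ be nonnegative reals with $\sum_{i=1}^B t_i = T$, and let $R_1,\dots,R_B$ be independent Rademacher random variables. Define $X = \sum_{i=1}^B t_i R_i$. Then $\mathbf{E}[|X|] \geq \frac{T}{\sqrt{3B}}$. -/

import Mathlib

/-!
With `s = ∑ tᵢ²`, independence and `Rᵢ² = 1` give `E[X²] = s` and
`E[X⁴] = 3s² - 2∑ tᵢ⁴ ≤ 3s²`. Hölder's inequality with exponents `3/2` and `3`,
applied to `X² = |X|^(2/3) |X|^(4/3)`, gives `E[X²]³ ≤ E[|X|]² E[X⁴]`, hence `s ≤ 3 E[|X|]²`.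
Cauchy–Schwarz `T² ≤ B s` finishes the proof.
-/

open MeasureTheory ProbabilityTheory

section Holder

variable {Ω : Type*} [MeasurableSpace Ω] {μ : Measure Ω}

theorem integral_sq_pow_three_le {X : Ω → ℝ} (hX₁ : MemLp X 1 μ) (hX₄ : MemLp X 4 μ) :
    (∫ ω, X ω ^ 2 ∂μ) ^ 3 ≤ (∫ ω, |X ω| ∂μ) ^ 2 * ∫ ω, X ω ^ 4 ∂μ := by
  have hf : MemLp (fun ω => |X ω| ^ ((2 : ℝ) / 3)) (ENNReal.ofReal (3 / 2)) μ := by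
    convert hX₁.norm_rpow_div (ENNReal.ofReal (2 / 3)) using 1
    · simp [ENNReal.toReal_ofReal (by norm_num : (0:ℝ) ≤ 2 / 3)]
    · rw [← ENNReal.ofReal_one, ← ENNReal.ofReal_div_of_pos (by norm_num)]
      norm_num
  have hg : MemLp (fun ω => |X ω| ^ ((4 : ℝ) / 3)) (ENNReal.ofReal 3) μ := by
    convert hX₄.norm_rpow_div (ENNReal.ofReal (4 / 3)) using 1
    · simp [ENNReal.toReal_ofReal (by norm_num : (0:ℝ) ≤ 4 / 3)]
    · rw [← ENNReal.ofReal_ofNat, ← ENNReal.ofReal_div_of_pos (by norm_num)]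
      norm_num
  have holder := integral_mul_le_Lp_mul_Lq_of_nonneg (μ := μ)
    ⟨by norm_num, by norm_num, by norm_num⟩
    (.of_forall fun ω => by positivity) (.of_forall fun ω => by positivity) hf hg
  have h2 : ∀ ω, |X ω| ^ ((2 : ℝ) / 3) * |X ω| ^ ((4 : ℝ) / 3) = X ω ^ 2 := fun ω => by
    rw [← Real.rpow_add' (abs_nonneg _) (by norm_num)]
    norm_num
  have h1 : ∀ ω, (|X ω| ^ ((2 : ℝ) / 3)) ^ ((3 : ℝ) / 2) = |X ω| := fun ω => by
    rw [← Real.rpow_mul (abs_nonneg _)]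
    norm_num
  have h4 : ∀ ω, (|X ω| ^ ((4 : ℝ) / 3)) ^ (3 : ℝ) = X ω ^ 4 := fun ω => by
    rw [← Real.rpow_mul (abs_nonneg _)]
    norm_num
    exact Even.pow_abs (by decide) _
  simp only [h2, h1, h4] at holder
  have hA : 0 ≤ ∫ ω, |X ω| ∂μ := integral_nonneg fun ω => abs_nonneg _
  have hM : 0 ≤ ∫ ω, X ω ^ 4 ∂μ := integral_nonneg fun ω => by positivity
  calc (∫ ω, X ω ^ 2 ∂μ) ^ 3
      ≤ ((∫ ω, |X ω| ∂μ) ^ ((1 : ℝ) / (3 / 2)) * (∫ ω, X ω ^ 4 ∂μ) ^ ((1 : ℝ) / 3)) ^ 3 :=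
        pow_le_pow_left₀ (integral_nonneg fun ω => sq_nonneg _) holder 3
    _ = (∫ ω, |X ω| ∂μ) ^ 2 * ∫ ω, X ω ^ 4 ∂μ := by
        rw [mul_pow, ← Real.rpow_mul_natCast hA, ← Real.rpow_mul_natCast hM]
        norm_num

end Holder

section AddIndependentSign

variable {Ω : Type*} [MeasurableSpace Ω]

theorem integral_add_mul_eq_of_indepFun {μ : Measure Ω} {F Z ε : Ω → ℝ}
    (hZε : IndepFun Z ε μ) (hF : Integrable F μ) (hZ : Integrable Z μ) (hε : Integrable ε μ)
    (hε₀ : ∫ ω, ε ω ∂μ = 0) :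
    ∫ ω, (F ω + Z ω * ε ω) ∂μ = ∫ ω, F ω ∂μ := by
  have hZε' : Integrable (fun ω => Z ω * ε ω) μ := hZε.integrable_mul hZ hε
  rw [integral_add hF hZε', hZε.integral_fun_mul_eq_mul_integral hZ.1 hε.1, hε₀, mul_zero,
    add_zero]

variable {P : Measure Ω} [IsProbabilityMeasure P] {Y ε : Ω → ℝ} {C : ℝ}

theorem integrable_pow_of_ae_abs_le (hY : AEStronglyMeasurable Y P)
    (hYC : ∀ᵐ ω ∂P, |Y ω| ≤ C) (n : ℕ) : Integrable (fun ω => Y ω ^ n) P := by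
  refine .of_bound (hY.pow n) (C ^ n) ?_
  filter_upwards [hYC] with ω h
  rw [Real.norm_eq_abs, abs_pow]
  exact pow_le_pow_left₀ (abs_nonneg _) h n

theorem integrable_of_ae_sq_eq_one (hε : AEStronglyMeasurable ε P)
    (hε₂ : ∀ᵐ ω ∂P, ε ω ^ 2 = 1) : Integrable ε P := by
  refine .of_bound hε 1 ?_
  filter_upwards [hε₂] with ω h
  rw [Real.norm_eq_abs, ← sq_le_one_iff_abs_le_one, h]

variable (hY : AEStronglyMeasurable Y P) (hYC : ∀ᵐ ω ∂P, |Y ω| ≤ C)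
  (hε : AEStronglyMeasurable ε P) (hε₂ : ∀ᵐ ω ∂P, ε ω ^ 2 = 1) (hε₀ : ∫ ω, ε ω ∂P = 0)
  (hYε : IndepFun Y ε P)
include hY hYC hε hε₂ hε₀ hYε

theorem integral_mul_add_sq (c : ℝ) :
    ∫ ω, (c * ε ω + Y ω) ^ 2 ∂P = c ^ 2 + ∫ ω, Y ω ^ 2 ∂P := by
  have hexp : (fun ω => (c * ε ω + Y ω) ^ 2)
      =ᵐ[P] fun ω => (c ^ 2 + Y ω ^ 2) + 2 * c * Y ω * ε ω := by
    filter_upwards [hε₂] with ω h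
    linear_combination c ^ 2 * h
  have hY₁ : Integrable Y P := by simpa using integrable_pow_of_ae_abs_le hY hYC 1
  have hY₂ := integrable_pow_of_ae_abs_le hY hYC 2
  have hind : IndepFun (fun ω => 2 * c * Y ω) ε P :=
    hYε.comp (φ := fun y => 2 * c * y) (ψ := id) (by fun_prop) measurable_id
  rw [integral_congr_ae hexp,
    integral_add_mul_eq_of_indepFun (F := fun ω => c ^ 2 + Y ω ^ 2) hind
      ((integrable_const _).add hY₂) (hY₁.const_mul _) (integrable_of_ae_sq_eq_one hε hε₂) hε₀,
    integral_add (integrable_const _) hY₂]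
  simp

theorem integral_mul_add_pow_four (c : ℝ) :
    ∫ ω, (c * ε ω + Y ω) ^ 4 ∂P
      = c ^ 4 + 6 * c ^ 2 * ∫ ω, Y ω ^ 2 ∂P + ∫ ω, Y ω ^ 4 ∂P := by
  -- `ε² = 1` makes `(cε + Y)⁴` affine in `ε`, and the `ε`-linear part has mean zero
  have hexp : (fun ω => (c * ε ω + Y ω) ^ 4)
      =ᵐ[P] fun ω => (c ^ 4 + 6 * c ^ 2 * Y ω ^ 2 + Y ω ^ 4)
        + (4 * c ^ 3 * Y ω + 4 * c * Y ω ^ 3) * ε ω := by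
    filter_upwards [hε₂] with ω h
    linear_combination
      (6 * c ^ 2 * Y ω ^ 2 + 4 * c ^ 3 * Y ω * ε ω + c ^ 4 * (ε ω ^ 2 + 1)) * h
  have hY₁ : Integrable Y P := by simpa using integrable_pow_of_ae_abs_le hY hYC 1
  have hY₃ := integrable_pow_of_ae_abs_le hY hYC 3
  have hY₄ := integrable_pow_of_ae_abs_le hY hYC 4
  have hY₂ : Integrable (fun ω => 6 * c ^ 2 * Y ω ^ 2) P :=
    (integrable_pow_of_ae_abs_le hY hYC 2).const_mul _
  have hZ : Integrable (fun ω => 4 * c ^ 3 * Y ω + 4 * c * Y ω ^ 3) P :=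
    (hY₁.const_mul _).add (hY₃.const_mul _)
  have hF₁ : Integrable (fun ω => c ^ 4 + 6 * c ^ 2 * Y ω ^ 2) P := (integrable_const _).add hY₂
  have hind : IndepFun (fun ω => 4 * c ^ 3 * Y ω + 4 * c * Y ω ^ 3) ε P :=
    hYε.comp (φ := fun y => 4 * c ^ 3 * y + 4 * c * y ^ 3) (ψ := id) (by fun_prop) measurable_id
  rw [integral_congr_ae hexp,
    integral_add_mul_eq_of_indepFun (F := fun ω => c ^ 4 + 6 * c ^ 2 * Y ω ^ 2 + Y ω ^ 4) hind
      (hF₁.add hY₄) hZ (integrable_of_ae_sq_eq_one hε hε₂) hε₀,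
    integral_add hF₁ hY₄, integral_add (integrable_const _) hY₂, integral_const_mul]
  simp

end AddIndependentSign

section RademacherSum

variable {Ω ι : Type*} [MeasurableSpace Ω] {P : Measure Ω} {R : ι → Ω → ℝ} (t : ι → ℝ)

theorem ae_abs_sum_mul_le (hR₂ : ∀ i, ∀ᵐ ω ∂P, R i ω ^ 2 = 1) (S : Finset ι) :
    ∀ᵐ ω ∂P, |∑ i ∈ S, t i * R i ω| ≤ ∑ i ∈ S, |t i| := by
  have hall : ∀ᵐ ω ∂P, ∀ i ∈ S, R i ω ^ 2 = 1 :=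
    (Filter.eventually_all_finset S).2 fun i _ => hR₂ i
  filter_upwards [hall] with ω hω
  refine (Finset.abs_sum_le_sum_abs _ _).trans (Finset.sum_le_sum fun i hi => ?_)
  rw [abs_mul]
  exact mul_le_of_le_one_right (abs_nonneg _) ((sq_le_one_iff_abs_le_one _).1 (hω i hi).le)

theorem aemeasurable_sum_mul (hR : ∀ i, AEMeasurable (R i) P) (S : Finset ι) :
    AEMeasurable (fun ω => ∑ i ∈ S, t i * R i ω) P :=
  S.aemeasurable_fun_sum fun i _ => (hR i).const_mul _

theorem indepFun_sum_mul_of_notMem (hR : ∀ i, AEMeasurable (R i) P) (hindep : iIndepFun R P)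
    {S : Finset ι} {a : ι} (ha : a ∉ S) :
    IndepFun (fun ω => ∑ i ∈ S, t i * R i ω) (R a) P := by
  classical
  -- rescale every coordinate but `a`, so that `R a` itself is a member of the family
  have hindep' : iIndepFun (fun i ω => Function.update t a 1 i * R i ω) P :=
    hindep.comp (fun i x => Function.update t a 1 i * x) fun i => measurable_const_mul _
  have h := hindep'.indepFun_finsetSum_of_notMem₀ (fun i => (hR i).const_mul _) ha
  convert h using 1
  · ext ω
    rw [Finset.sum_apply]
    exact Finset.sum_congr rfl fun i hi => by
      rw [Function.update_of_ne (ne_of_mem_of_not_mem hi ha)]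
  · ext ω
    simp

variable [IsProbabilityMeasure P] {t} (hR : ∀ i, AEMeasurable (R i) P)
  (hR₂ : ∀ i, ∀ᵐ ω ∂P, R i ω ^ 2 = 1) (hR₀ : ∀ i, ∫ ω, R i ω ∂P = 0) (hindep : iIndepFun R P)
include hR hR₂ hR₀ hindep

theorem integral_sum_mul_sq (S : Finset ι) :
    ∫ ω, (∑ i ∈ S, t i * R i ω) ^ 2 ∂P = ∑ i ∈ S, t i ^ 2 := by
  classical
  induction S using Finset.induction_on with
  | empty => simp
  | insert a S ha ih =>
    simp only [Finset.sum_insert ha]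
    rw [integral_mul_add_sq (aemeasurable_sum_mul t hR S).aestronglyMeasurable
      (ae_abs_sum_mul_le t hR₂ S) (hR a).aestronglyMeasurable (hR₂ a) (hR₀ a)
      (indepFun_sum_mul_of_notMem t hR hindep ha), ih]

theorem integral_sum_mul_pow_four_le (S : Finset ι) :
    ∫ ω, (∑ i ∈ S, t i * R i ω) ^ 4 ∂P ≤ 3 * (∑ i ∈ S, t i ^ 2) ^ 2 := by
  classical
  induction S using Finset.induction_on with
  | empty => simp
  | insert a S ha ih =>
    simp only [Finset.sum_insert ha]
    rw [integral_mul_add_pow_four (aemeasurable_sum_mul t hR S).aestronglyMeasurable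
      (ae_abs_sum_mul_le t hR₂ S) (hR a).aestronglyMeasurable (hR₂ a) (hR₀ a)
      (indepFun_sum_mul_of_notMem t hR hindep ha), integral_sum_mul_sq hR hR₂ hR₀ hindep]
    have hs : 0 ≤ ∑ i ∈ S, t i ^ 2 := Finset.sum_nonneg fun i _ => sq_nonneg (t i)
    nlinarith [pow_nonneg (sq_nonneg (t a)) 2]

theorem sum_sq_le_three_mul_sq_integral_abs_sum [Fintype ι] :
    ∑ i, t i ^ 2 ≤ 3 * (∫ ω, |∑ i, t i * R i ω| ∂P) ^ 2 := by
  set X := fun ω => ∑ i, t i * R i ω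
  have hX : MemLp X ⊤ P :=
    memLp_top_of_bound (aemeasurable_sum_mul t hR _).aestronglyMeasurable _
      (ae_abs_sum_mul_le t hR₂ Finset.univ)
  have hcube := integral_sq_pow_three_le (hX.mono_exponent le_top) (hX.mono_exponent le_top)
  rw [integral_sum_mul_sq hR hR₂ hR₀ hindep] at hcube
  have h₄ := integral_sum_mul_pow_four_le (t := t) hR hR₂ hR₀ hindep Finset.univ
  have hs : 0 ≤ ∑ i, t i ^ 2 := Finset.sum_nonneg fun i _ => sq_nonneg _
  rcases hs.eq_or_lt with hs₀ | hs₀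
  · rw [← hs₀]; positivity
  · refine le_of_mul_le_mul_right ?_ (pow_pos hs₀ 2)
    nlinarith [mul_le_mul_of_nonneg_left h₄ (sq_nonneg (∫ ω, |X ω| ∂P))]

end RademacherSum

noncomputable def rademacherMeasure : Measure ℝ :=
  (1 / 2 : ENNReal) • Measure.dirac 1 + (1 / 2 : ENNReal) • Measure.dirac (-1)

instance : IsProbabilityMeasure rademacherMeasure :=
  ⟨by simp [rademacherMeasure, ENNReal.inv_two_add_inv_two]⟩

theorem ae_sq_eq_one_rademacherMeasure : ∀ᵐ x ∂rademacherMeasure, x ^ 2 = 1 := by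
  simp [rademacherMeasure]

theorem integral_id_rademacherMeasure : ∫ x, x ∂rademacherMeasure = 0 := by
  rw [rademacherMeasure, integral_add_measure, integral_smul_measure, integral_smul_measure,
    integral_dirac, integral_dirac]
  · norm_num
  all_goals exact (integrable_dirac (by simp)).smul_measure (by simp)

section RademacherVariable

variable {Ω : Type*} [MeasurableSpace Ω] {P : Measure Ω} {ε : Ω → ℝ}
  (hε : Measure.map ε P = rademacherMeasure)
include hε

theorem aemeasurable_of_map_eq_rademacherMeasure : AEMeasurable ε P :=
  .of_map_ne_zero (hε ▸ IsProbabilityMeasure.ne_zero _)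

theorem ae_sq_eq_one_of_map_eq_rademacherMeasure : ∀ᵐ ω ∂P, ε ω ^ 2 = 1 :=
  ae_of_ae_map (aemeasurable_of_map_eq_rademacherMeasure hε)
    (hε ▸ ae_sq_eq_one_rademacherMeasure)

theorem integral_eq_zero_of_map_eq_rademacherMeasure : ∫ ω, ε ω ∂P = 0 := by
  have h : ∫ x, x ∂(P.map ε) = ∫ ω, ε ω ∂P :=
    integral_map (aemeasurable_of_map_eq_rademacherMeasure hε) aestronglyMeasurable_id
  rw [← h, hε, integral_id_rademacherMeasure]

end RademacherVariable

theorem stmt_3_general {Ω : Type*} [MeasurableSpace Ω] (P : Measure Ω) [IsProbabilityMeasure P]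
    (B : ℕ) (t : Fin B → ℝ) (T : ℝ)
    (hsum : ∑ i, t i = T)
    (R : Fin B → Ω → ℝ)
    (hindep : iIndepFun R P)
    (hlaw : ∀ i, Measure.map (R i) P
      = (1/2 : ENNReal) • Measure.dirac (1 : ℝ) + (1/2 : ENNReal) • Measure.dirac (-1 : ℝ)) :
    ∫ ω, |∑ i, t i * R i ω| ∂P ≥ T / Real.sqrt (3 * B) := by
  have hlaw' : ∀ i, P.map (R i) = rademacherMeasure := hlaw
  have hK := sum_sq_le_three_mul_sq_integral_abs_sum (t := t)
    (fun i => aemeasurable_of_map_eq_rademacherMeasure (hlaw' i))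
    (fun i => ae_sq_eq_one_of_map_eq_rademacherMeasure (hlaw' i))
    (fun i => integral_eq_zero_of_map_eq_rademacherMeasure (hlaw' i)) hindep
  have hCS : T ^ 2 ≤ B * ∑ i, t i ^ 2 := by
    simpa [hsum] using sq_sum_le_card_mul_sum_sq (s := Finset.univ) (f := t)
  set A := ∫ ω, |∑ i, t i * R i ω| ∂P
  have hA : 0 ≤ A := integral_nonneg fun ω => abs_nonneg _
  refine div_le_of_le_mul₀ (Real.sqrt_nonneg _) hA (le_of_abs_le (abs_le_of_sq_le_sq ?_ ?_))
  · rw [mul_pow, Real.sq_sqrt (by positivity)]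
    nlinarith
  · positivity

theorem stmt_3 {Ω : Type*} [MeasurableSpace Ω] (P : Measure Ω) [IsProbabilityMeasure P]
    (B : ℕ) (hB : 1 ≤ B) (t : Fin B → ℝ) (ht : ∀ i, 0 ≤ t i) (T : ℝ) (hT : 0 < T)
    (hsum : ∑ i, t i = T)
    (R : Fin B → Ω → ℝ) (hmeas : ∀ i, Measurable (R i))
    (hindep : iIndepFun R P)
    (hlaw : ∀ i, Measure.map (R i) P
      = (1/2 : ENNReal) • Measure.dirac (1 : ℝ) + (1/2 : ENNReal) • Measure.dirac (-1 : ℝ)) :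
    ∫ ω, |∑ i, t i * R i ω| ∂P ≥ T / Real.sqrt (3 * B) :=
  stmt_3_general P B t T hsum R hindep hlaw
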